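/- arXiv:2010.11243 — 2 statements merged into one kernel-verified Lean document; each statement's English description precedes it below -/
import Mathlib

section
/- Let S be a finite set, δ ≥ 0, and f : Δ(S) → ℝ a convex function that is δ-Lipschitz with respect to the ℓ1 metric. Let (b_1, y_1), …, (b_k, y_k) ∈ Δ(S) × ℝ be such that f(b_i) ≤ y_i for every i and such that every b ∈ Δ(S) is a convex combination of b_1, …, b_k. Define V₁(b) = min { Σ_{i=1}^k λ_i y_i : λ ∈ ℝ^k, λ_i ≥ 0, Σ_i λ_i = 1, Σ_i λ_i b_i = b } and V̄(b) = min_{b' ∈ Δ(S)} [ V₁(b') + δ‖b − b'‖₁ ]. Then V̄ is δ-Lipschitz with respect to the ℓ1 metric and f(b) ≤ V̄(b) ≤ V₁(b) for every b ∈ Δ(S). -/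
open scoped BigOperators

noncomputable section

/-- ℓ1 distance on `S → ℝ`. -/
def l1dist {S : Type*} [Fintype S] (p q : S → ℝ) : ℝ := ∑ s, |p s - q s|

/-- `f` is `k`-Lipschitz with respect to the ℓ1 metric on the probability simplex. -/
def LipOnSimplex {S : Type*} [Fintype S] (k : ℝ) (f : (S → ℝ) → ℝ) : Prop :=
  ∀ p ∈ stdSimplex ℝ S, ∀ q ∈ stdSimplex ℝ S, |f p - f q| ≤ k * l1dist p q

lemma l1dist_self {S : Type*} [Fintype S] (p : S → ℝ) : l1dist p p = 0 := by
  simp [l1dist]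

lemma l1dist_triangle {S : Type*} [Fintype S] (p q r : S → ℝ) :
    l1dist p r ≤ l1dist p q + l1dist q r := by
  rw [l1dist, l1dist, l1dist, ← Finset.sum_add_distrib]
  exact Finset.sum_le_sum fun s _ => abs_sub_le _ _ _

lemma l1dist_comm {S : Type*} [Fintype S] (p q : S → ℝ) : l1dist p q = l1dist q p := by
  simp [l1dist, abs_sub_comm]

/-- The lower δ-Lipschitz envelope `V̄` of the point-set upper bound `V₁` is δ-Lipschitz
and satisfies `f ≤ V̄ ≤ V₁` on the simplex. -/
theorem lipschitz_envelope_upper_bound {S : Type*} [Fintype S] (δ : ℝ) (hδ : 0 ≤ δ)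
    (f : (S → ℝ) → ℝ)
    (hconv : ConvexOn ℝ (stdSimplex ℝ S) f) (hlip : LipOnSimplex δ f)
    (k : ℕ) (hk : 0 < k) (bp : Fin k → S → ℝ) (y : Fin k → ℝ)
    (hbp : ∀ i, bp i ∈ stdSimplex ℝ S) (hy : ∀ i, f (bp i) ≤ y i)
    (hcover : ∀ b ∈ stdSimplex ℝ S, ∃ lam : Fin k → ℝ,
      (∀ i, 0 ≤ lam i) ∧ (∑ i, lam i) = 1 ∧ ∀ s, (∑ i, lam i * bp i s) = b s)
    (V1 Vbar : (S → ℝ) → ℝ)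
    (hV1 : ∀ b ∈ stdSimplex ℝ S, V1 b = sInf {v : ℝ | ∃ lam : Fin k → ℝ,
      (∀ i, 0 ≤ lam i) ∧ (∑ i, lam i) = 1 ∧ (∀ s, (∑ i, lam i * bp i s) = b s) ∧
      v = ∑ i, lam i * y i})
    (hVbar : ∀ b ∈ stdSimplex ℝ S, Vbar b =
      sInf {v : ℝ | ∃ b' ∈ stdSimplex ℝ S, v = V1 b' + δ * l1dist b b'}) :
    LipOnSimplex δ Vbar ∧ ∀ b ∈ stdSimplex ℝ S, f b ≤ Vbar b ∧ Vbar b ≤ V1 b := by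
  -- f b ≤ V1 b on the simplex
  have hfV1 : ∀ b ∈ stdSimplex ℝ S, f b ≤ V1 b := by
    intro b hb
    rw [hV1 b hb]
    apply le_csInf
    · obtain ⟨lam, h1, h2, h3⟩ := hcover b hb
      exact ⟨_, lam, h1, h2, h3, rfl⟩
    · rintro v ⟨lam, h1, h2, h3, rfl⟩
      have hbeq : b = ∑ i, lam i • bp i := by
        funext s
        rw [← h3 s]
        simp [Finset.sum_apply]
      have := hconv.map_sum_le (t := Finset.univ) (fun i _ => h1 i) h2 (fun i _ => hbp i)
      rw [← hbeq] at this
      refine this.trans (Finset.sum_le_sum fun i _ => ?_)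
      exact mul_le_mul_of_nonneg_left (hy i) (h1 i)
  -- lower bound for elements of the Vbar set
  have hlb : ∀ b ∈ stdSimplex ℝ S, ∀ b' ∈ stdSimplex ℝ S,
      f b ≤ V1 b' + δ * l1dist b b' := by
    intro b hb b' hb'
    have h1 : f b - f b' ≤ δ * l1dist b b' := le_trans (le_abs_self _) (hlip b hb b' hb')
    have h2 := hfV1 b' hb'
    linarith
  have hbdd : ∀ b ∈ stdSimplex ℝ S,
      BddBelow {v : ℝ | ∃ b' ∈ stdSimplex ℝ S, v = V1 b' + δ * l1dist b b'} := by
    intro b hb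
    exact ⟨f b, by rintro v ⟨b', hb', rfl⟩; exact hlb b hb b' hb'⟩
  have hne : ∀ b ∈ stdSimplex ℝ S,
      ({v : ℝ | ∃ b' ∈ stdSimplex ℝ S, v = V1 b' + δ * l1dist b b'}).Nonempty :=
    fun b hb => ⟨_, b, hb, rfl⟩
  constructor
  · -- Lipschitz
    intro p hp q hq
    have key : ∀ a ∈ stdSimplex ℝ S, ∀ c ∈ stdSimplex ℝ S,
        Vbar a - Vbar c ≤ δ * l1dist a c := by
      intro a ha c hc
      rw [sub_le_comm, hVbar c hc, le_csInf_iff (hbdd c hc) (hne c hc)]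
      rintro v ⟨b', hb', rfl⟩
      have h1 : Vbar a ≤ V1 b' + δ * l1dist a b' := by
        rw [hVbar a ha]
        exact csInf_le (hbdd a ha) ⟨b', hb', rfl⟩
      have h2 := l1dist_triangle a c b'
      nlinarith
    rw [abs_sub_le_iff]
    refine ⟨key p hp q hq, ?_⟩
    rw [l1dist_comm]
    exact key q hq p hp
  · intro b hb
    constructor
    · rw [hVbar b hb]
      apply le_csInf (hne b hb)
      rintro v ⟨b', hb', rfl⟩
      exact hlb b hb b' hb'
    · rw [hVbar b hb, hV1 b hb]
      have : V1 b + δ * l1dist b b ∈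
          {v : ℝ | ∃ b' ∈ stdSimplex ℝ S, v = V1 b' + δ * l1dist b b'} := ⟨b, hb, rfl⟩
      have h := csInf_le (hbdd b hb) this
      rw [l1dist_self] at h
      rw [← hV1 b hb]
      simpa using h
end
end

section
/- Let G be a one-sided POSG, let α_1, …, α_k be linear functions on Δ(S), let Γ = Conv({α_1, …, α_k}), and let b ∈ Δ(S). Then sup_{π1 ∈ Π1} sup_{ᾱ ∈ Γ^{A1×O}} valcomp(π1, ᾱ)(b) equals the optimal value (which is attained) of the following linear program: maximize Σ_{s ∈ S} b(s)·v(s) over real variables (π1(a1))_{a1 ∈ A1}, (λ̂_i^{a1,o})_{1 ≤ i ≤ k, (a1,o) ∈ A1×O}, (α̂^{a1,o}(s'))_{(a1,o,s')}, and (v(s))_{s ∈ S}, subject to: v(s) ≤ Σ_{a1} π1(a1) R(s, a1, a2) + γ Σ_{(a1,o,s')} T(o, s' | s, a1, a2) α̂^{a1,o}(s') for all (s, a2) ∈ S × A2; α̂^{a1,o}(s') = Σ_{i=1}^k λ̂_i^{a1,o} α_i(s') for all (a1, o, s'); Σ_{i=1}^k λ̂_i^{a1,o} = π1(a1) for all (a1,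 o); Σ_{a1} π1(a1) = 1; π1(a1) ≥ 0 for all a1; and λ̂_i^{a1,o} ≥ 0 for all i, a1, o. -/
/-!
The supremum is a maximum: `valcomp` is continuous in `(π1, ᾱ)`, and `Δ(A1) × Γ^{A1×O}` is
compact. The program is the change of variables `λ̂^{a1,o} = π1(a1) λ^{a1,o}`,
`α̂^{a1,o} = π1(a1) ᾱ^{a1,o}`, which makes the payoff `Σ_{a1} π1(a1) (R + γ Σ T ᾱ)` linear.
Conversely, a feasible `λ̂^{a1,o}` with total mass `π1(a1)` is rescaled to convex weights
(arbitrary ones where `π1(a1) = 0`). The constraints on `v` say exactly that `v(s)` is at most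
the vertex value `valcomp(π1, ᾱ)(s)`, so for `b ≥ 0` the objective is at most
`valcomp(π1, ᾱ)(b)`, with equality for the largest feasible `v`.
-/

open scoped BigOperators

noncomputable section

/-- Evaluation at a belief `b` of the linear function on the simplex with vertex values
`α : S → ℝ`. -/
def lineval {S : Type*} [Fintype S] (α : S → ℝ) (b : S → ℝ) : ℝ := ∑ s, b s * α s

/-- A one-sided partially observable stochastic game. -/
structure OSPOSG (S A1 A2 O : Type*) [Fintype S] [Fintype A1] [Fintype A2] [Fintype O] where
  /-- transition function: `T s a1 a2 o s'` is the probability of observing `o` and moving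
  to `s'` from `s` under actions `a1, a2`. -/
  T : S → A1 → A2 → O → S → ℝ
  T_nonneg : ∀ s a1 a2 o s', 0 ≤ T s a1 a2 o s'
  T_sum : ∀ s a1 a2, ∑ o, ∑ s', T s a1 a2 o s' = 1
  /-- reward function of player 1 -/
  R : S → A1 → A2 → ℝ
  /-- discount factor -/
  γ : ℝ
  γ_pos : 0 < γ
  γ_lt_one : γ < 1

namespace OSPOSG

variable {S A1 A2 O : Type*} [Fintype S] [Fintype A1] [Fintype A2] [Fintype O]
  [Nonempty S] [Nonempty A1] [Nonempty A2] [Nonempty O]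

/-- The minimum reward `r_min`. -/
def rmin (G : OSPOSG S A1 A2 O) : ℝ :=
  Finset.univ.inf' Finset.univ_nonempty fun x : S × A1 × A2 => G.R x.1 x.2.1 x.2.2

/-- The maximum reward `r_max`. -/
def rmax (G : OSPOSG S A1 A2 O) : ℝ :=
  Finset.univ.sup' Finset.univ_nonempty fun x : S × A1 × A2 => G.R x.1 x.2.1 x.2.2

/-- `L = r_min / (1 - γ)`. -/
def Lval (G : OSPOSG S A1 A2 O) : ℝ := G.rmin / (1 - G.γ)

/-- `U = r_max / (1 - γ)`. -/
def Uval (G : OSPOSG S A1 A2 O) : ℝ := G.rmax / (1 - G.γ)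

/-- `δ = (U - L) / 2`. -/
def δval (G : OSPOSG S A1 A2 O) : ℝ := (G.Uval - G.Lval) / 2

/-- The set of stage strategies of player 2. -/
def Pi2 (S A2 : Type*) [Fintype A2] : Set (S → A2 → ℝ) :=
  {π2 | ∀ s, π2 s ∈ stdSimplex ℝ A2}

/-- Vertex values of the value composition `valcomp(π1, ᾱ)`. -/
def valcompVert (G : OSPOSG S A1 A2 O) (π1 : A1 → ℝ) (αb : A1 → O → S → ℝ) (s : S) : ℝ :=
  Finset.univ.inf' Finset.univ_nonempty fun a2 =>
    ∑ a1, π1 a1 * (G.R s a1 a2 + G.γ * ∑ o, ∑ s', G.T s a1 a2 o s' * αb a1 o s')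

/-- The value composition `valcomp(π1, ᾱ)`, a linear function of the belief `b`. -/
def valcomp (G : OSPOSG S A1 A2 O) (π1 : A1 → ℝ) (αb : A1 → O → S → ℝ) (b : S → ℝ) : ℝ :=
  ∑ s, b s * G.valcompVert π1 αb s

/-- `Pr_{b,π1,π2}[a1, o]`: the probability that player 1 plays `a1` and observes `o`. -/
def Pr (G : OSPOSG S A1 A2 O) (b : S → ℝ) (π1 : A1 → ℝ) (π2 : S → A2 → ℝ)
    (a1 : A1) (o : O) : ℝ :=
  ∑ s, ∑ a2, ∑ s', b s * π1 a1 * π2 s a2 * G.T s a1 a2 o s'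

/-- The updated belief `τ(b, a1, π2, o)` of player 1 (junk value `0` if the normalizing
constant vanishes; such terms are always multiplied by a zero probability below). -/
def beliefUpd (G : OSPOSG S A1 A2 O) (b : S → ℝ) (a1 : A1) (π2 : S → A2 → ℝ) (o : O) :
    S → ℝ := fun s' =>
  (∑ s, ∑ a2, b s * π2 s a2 * G.T s a1 a2 o s') /
    (∑ s'', ∑ s, ∑ a2, b s * π2 s a2 * G.T s a1 a2 o s'')

/-- The stage utility `u^{V,b}(π1, π2)`. -/
def stageU (G : OSPOSG S A1 A2 O) (V : (S → ℝ) → ℝ) (b : S → ℝ)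
    (π1 : A1 → ℝ) (π2 : S → A2 → ℝ) : ℝ :=
  (∑ s, ∑ a1, ∑ a2, b s * π1 a1 * π2 s a2 * G.R s a1 a2) +
    G.γ * ∑ a1, ∑ o, G.Pr b π1 π2 a1 o * V (G.beliefUpd b a1 π2 o)

/-- The minimax (Bellman) operator `[HV](b) = sup_{π1} inf_{π2} u^{V,b}(π1,π2)`. -/
def Hop (G : OSPOSG S A1 A2 O) (V : (S → ℝ) → ℝ) (b : S → ℝ) : ℝ :=
  ⨆ π1 : stdSimplex ℝ A1, ⨅ π2 : Pi2 S A2, G.stageU V b π1.1 π2.1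

end OSPOSG

theorem IsGreatest.of_subset_of_forall_exists_le {α : Type*} [Preorder α] {s t : Set α} {a : α}
    (h : IsGreatest s a) (hst : s ⊆ t) (hts : ∀ y ∈ t, ∃ z ∈ s, y ≤ z) : IsGreatest t a :=
  ⟨hst h.1, fun y hy => let ⟨_, hz, hyz⟩ := hts y hy; hyz.trans (h.2 hz)⟩

theorem convexHull_range_eq_image_stdSimplex {ι E : Type*} [Fintype ι] [AddCommGroup E]
    [Module ℝ E] (v : ι → E) :
    convexHull ℝ (Set.range v) = (fun w : ι → ℝ => ∑ i, w i • v i) '' stdSimplex ℝ ι := by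
  classical
  have hv : v = Fintype.linearCombination ℝ v ∘ fun i => Pi.single i 1 := by
    ext i
    simp
  conv_lhs =>
    rw [hv, Set.range_comp, ← LinearMap.image_convexHull, convexHull_rangle_single_eq_stdSimplex]
  rfl

theorem exists_mem_stdSimplex_eq_sum_smul {ι : Type*} [Fintype ι] [Nonempty ι] {lam : ι → ℝ}
    (hlam : ∀ i, 0 ≤ lam i) : ∃ w ∈ stdSimplex ℝ ι, lam = (∑ i, lam i) • w := by
  classical
  by_cases hsum : ∑ i, lam i = 0
  · refine ⟨Pi.single (Classical.arbitrary ι) 1, single_mem_stdSimplex ℝ _, ?_⟩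
    rw [hsum, zero_smul]
    ext i
    exact (Finset.sum_eq_zero_iff_of_nonneg fun j _ => hlam j).1 hsum i (Finset.mem_univ i)
  · refine ⟨(∑ i, lam i)⁻¹ • lam, ⟨fun i => ?_, ?_⟩, ?_⟩
    · exact smul_nonneg (inv_nonneg.2 (Finset.sum_nonneg fun j _ => hlam j)) (hlam i)
    · simp only [Pi.smul_apply, smul_eq_mul, ← Finset.mul_sum, inv_mul_cancel₀ hsum]
    · rw [smul_smul, mul_inv_cancel₀ hsum, one_smul]

namespace OSPOSG

section

variable {S A1 A2 O : Type*} [Fintype S] [Fintype A1] [Fintype A2] [Fintype O] [Nonempty A2]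

def maxCompositionValues (G : OSPOSG S A1 A2 O) (Γ : Set (S → ℝ)) (b : S → ℝ) : Set ℝ :=
  {y | ∃ π1 ∈ stdSimplex ℝ A1, ∃ αb : A1 → O → S → ℝ,
    (∀ a1 o, αb a1 o ∈ Γ) ∧ y = G.valcomp π1 αb b}

def lpObjectiveValues {ι : Type*} [Fintype ι] (G : OSPOSG S A1 A2 O) (α : ι → S → ℝ)
    (b : S → ℝ) : Set ℝ :=
  {y | ∃ (π1 : A1 → ℝ) (lam : ι → A1 → O → ℝ) (ahat : A1 → O → S → ℝ) (v : S → ℝ),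
    (∀ s a2, v s ≤ (∑ a1, π1 a1 * G.R s a1 a2) +
      G.γ * ∑ a1, ∑ o, ∑ s', G.T s a1 a2 o s' * ahat a1 o s') ∧
    (∀ a1 o s', ahat a1 o s' = ∑ i, lam i a1 o * α i s') ∧
    (∀ a1 o, (∑ i, lam i a1 o) = π1 a1) ∧
    ((∑ a1, π1 a1) = 1) ∧
    (∀ a1, 0 ≤ π1 a1) ∧
    (∀ i a1 o, 0 ≤ lam i a1 o) ∧
    y = ∑ s, b s * v s}

theorem le_valcompVert_iff (G : OSPOSG S A1 A2 O) {π1 : A1 → ℝ} {αb ahat : A1 → O → S → ℝ}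
    (hahat : ∀ a1 o s', π1 a1 * αb a1 o s' = ahat a1 o s') (s : S) (x : ℝ) :
    x ≤ G.valcompVert π1 αb s ↔ ∀ a2, x ≤ (∑ a1, π1 a1 * G.R s a1 a2) +
      G.γ * ∑ a1, ∑ o, ∑ s', G.T s a1 a2 o s' * ahat a1 o s' := by
  have hpayoff : ∀ a2,
      ∑ a1, π1 a1 * (G.R s a1 a2 + G.γ * ∑ o, ∑ s', G.T s a1 a2 o s' * αb a1 o s') =
        (∑ a1, π1 a1 * G.R s a1 a2) + G.γ * ∑ a1, ∑ o, ∑ s', G.T s a1 a2 o s' * ahat a1 o s' := by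
    intro a2
    simp only [← hahat, mul_add, Finset.sum_add_distrib, Finset.mul_sum]
    congr 1
    refine Finset.sum_congr rfl fun a1 _ => Finset.sum_congr rfl fun o _ =>
      Finset.sum_congr rfl fun s' _ => ?_
    ring
  simp only [valcompVert, Finset.le_inf'_iff, Finset.mem_univ, true_implies, hpayoff]

theorem continuous_valcomp (G : OSPOSG S A1 A2 O) (b : S → ℝ) :
    Continuous fun p : (A1 → ℝ) × (A1 → O → S → ℝ) => G.valcomp p.1 p.2 b := by
  unfold valcomp valcompVert
  refine continuous_finsetSum _ fun s _ => continuous_const.mul ?_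
  exact Continuous.finset_inf'_apply _ fun a2 _ => by fun_prop

theorem isGreatest_sSup_maxCompositionValues [Nonempty A1] (G : OSPOSG S A1 A2 O)
    {Γ : Set (S → ℝ)} (hΓ : IsCompact Γ) (hΓne : Γ.Nonempty) (b : S → ℝ) :
    IsGreatest (G.maxCompositionValues Γ b) (sSup (G.maxCompositionValues Γ b)) := by
  set D := stdSimplex ℝ A1 ×ˢ Set.univ.pi fun _ : A1 => Set.univ.pi fun _ : O => Γ
  have hD : G.maxCompositionValues Γ b = (fun p => G.valcomp p.1 p.2 b) '' D := by
    ext y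
    constructor
    · rintro ⟨π1, hπ1, αb, hαb, rfl⟩
      exact ⟨(π1, αb), ⟨hπ1, fun a1 _ o _ => hαb a1 o⟩, rfl⟩
    · rintro ⟨⟨π1, αb⟩, ⟨hπ1, hαb⟩, rfl⟩
      exact ⟨π1, hπ1, αb, fun a1 o => hαb a1 trivial o trivial, rfl⟩
  have hDcompact : IsCompact D :=
    (isCompact_stdSimplex ℝ A1).prod (isCompact_univ_pi fun _ => isCompact_univ_pi fun _ => hΓ)
  have hDne : D.Nonempty := by
    classical
    obtain ⟨x, hx⟩ := hΓne
    exact ⟨(Pi.single (Classical.arbitrary A1) 1, fun _ _ => x),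
      single_mem_stdSimplex ℝ _, fun _ _ _ _ => hx⟩
  rw [hD]
  exact (hDcompact.image (G.continuous_valcomp b)).isGreatest_sSup (hDne.image _)

theorem maxCompositionValues_subset_lpObjectiveValues {ι : Type*} [Fintype ι]
    (G : OSPOSG S A1 A2 O) (α : ι → S → ℝ) (b : S → ℝ) :
    G.maxCompositionValues (convexHull ℝ (Set.range α)) b ⊆ G.lpObjectiveValues α b := by
  rintro y ⟨π1, hπ1, αb, hαb, rfl⟩
  simp only [convexHull_range_eq_image_stdSimplex] at hαb
  choose w hw hαbw using hαb
  refine ⟨π1, fun i a1 o => π1 a1 * w a1 o i, fun a1 o s' => π1 a1 * αb a1 o s',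
    G.valcompVert π1 αb, fun s => (G.le_valcompVert_iff (fun _ _ _ => rfl) s _).1 le_rfl,
    fun a1 o s' => ?_, fun a1 o => ?_, hπ1.2, hπ1.1,
    fun i a1 o => mul_nonneg (hπ1.1 a1) ((hw a1 o).1 i), rfl⟩
  · simp only [← hαbw, Finset.sum_apply, Pi.smul_apply, smul_eq_mul, Finset.mul_sum, mul_assoc]
  · rw [← Finset.mul_sum, (hw a1 o).2, mul_one]

theorem exists_mem_maxCompositionValues_ge {ι : Type*} [Fintype ι] [Nonempty ι]
    (G : OSPOSG S A1 A2 O) (α : ι → S → ℝ) {b : S → ℝ} (hb : ∀ s, 0 ≤ b s) {y : ℝ}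
    (hy : y ∈ G.lpObjectiveValues α b) :
    ∃ z ∈ G.maxCompositionValues (convexHull ℝ (Set.range α)) b, y ≤ z := by
  obtain ⟨π1, lam, ahat, v, hv, hahat, hlam, hπ1sum, hπ1, hlam0, rfl⟩ := hy
  choose w hw hlamw using fun a1 o => exists_mem_stdSimplex_eq_sum_smul (lam := (lam · a1 o))
    fun i => hlam0 i a1 o
  refine ⟨_, ⟨π1, ⟨hπ1, hπ1sum⟩, fun a1 o => ∑ i, w a1 o i • α i, fun a1 o => ?_, rfl⟩, ?_⟩
  · rw [convexHull_range_eq_image_stdSimplex]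
    exact ⟨w a1 o, hw a1 o, rfl⟩
  · have hscaled : ∀ a1 o s', π1 a1 * (∑ i, w a1 o i • α i) s' = ahat a1 o s' := by
      intro a1 o s'
      simp only [hahat, Finset.sum_apply, Pi.smul_apply, smul_eq_mul, Finset.mul_sum]
      refine Finset.sum_congr rfl fun i _ => ?_
      rw [← mul_assoc, congrFun (hlamw a1 o) i, hlam, Pi.smul_apply, smul_eq_mul]
    exact Finset.sum_le_sum fun s _ => mul_le_mul_of_nonneg_left
      ((G.le_valcompVert_iff hscaled s _).2 (hv s)) (hb s)

end

variable {S A1 A2 O : Type*} [Fintype S] [Fintype A1] [Fintype A2] [Fintype O]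
  [Nonempty S] [Nonempty A1] [Nonempty A2] [Nonempty O]

/-- The value `[HV](b)` of the max-composition over `Γ = Conv({α_1, …, α_k})` coincides with
the optimal value (which is attained) of the linear program of Lemma 13:
it is the greatest objective value `Σ_s b(s)·v(s)` over all feasible
`(π1, λ̂, α̂, v)`. -/
theorem maxComposition_eq_LP (G : OSPOSG S A1 A2 O) (k : ℕ) (hk : 0 < k)
    (α : Fin k → S → ℝ) (b : S → ℝ) (hb : b ∈ stdSimplex ℝ S) :
    IsGreatest
      {y : ℝ | ∃ (π1 : A1 → ℝ) (lam : Fin k → A1 → O → ℝ)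
          (ahat : A1 → O → S → ℝ) (v : S → ℝ),
        (∀ s a2, v s ≤ (∑ a1, π1 a1 * G.R s a1 a2) +
          G.γ * ∑ a1, ∑ o, ∑ s', G.T s a1 a2 o s' * ahat a1 o s') ∧
        (∀ a1 o s', ahat a1 o s' = ∑ i, lam i a1 o * α i s') ∧
        (∀ a1 o, (∑ i, lam i a1 o) = π1 a1) ∧
        ((∑ a1, π1 a1) = 1) ∧
        (∀ a1, 0 ≤ π1 a1) ∧
        (∀ i a1 o, 0 ≤ lam i a1 o) ∧
        y = ∑ s, b s * v s}
      (sSup {y : ℝ | ∃ π1 ∈ stdSimplex ℝ A1, ∃ αb : A1 → O → S → ℝ,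
        (∀ a1 o, αb a1 o ∈ convexHull ℝ (Set.range α)) ∧ y = G.valcomp π1 αb b}) := by
  have : Nonempty (Fin k) := ⟨⟨0, hk⟩⟩
  have hΓ : IsCompact (convexHull ℝ (Set.range α)) :=
    (Set.finite_range α).isCompact_convexHull (𝕜 := ℝ)
  have hΓne : (convexHull ℝ (Set.range α)).Nonempty :=
    (Set.range_nonempty α).mono (subset_convexHull ℝ _)
  exact (G.isGreatest_sSup_maxCompositionValues hΓ hΓne b).of_subset_of_forall_exists_le
    (G.maxCompositionValues_subset_lpObjectiveValues α b)
    fun _ hy => G.exists_mem_maxCompositionValues_ge α hb.1 hy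

end OSPOSG
end
end
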